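/- A constant function u ≡ c on an open set Ω ⊂ ℝ² satisfies the global median value property: for every x ∈ Ω and every r > 0 with closure of B(x,r) contained in Ω, the median of u over ∂B(x,r) equals u(x). Conversely, if u is continuous on a bounded connected open Ω, continuous up to the boundary, satisfies the local median value property, and u is constant on ∂Ω, then u is constant on Ω. -/

import Mathlib

open MeasureTheory Set Metric Real Filter Topology

/-! The converse is the maximum principle applied to `u` and `-u`.
A maximum of `u` that exceeds the boundary values is attained on a compact set `K ⊆ Ω`.
At the lexicographically highest point `z` of `K` (largest real part, then largest imaginary
part), every point of a small circle about `z` where `u` is maximal lies in the left half-plane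
`re ≤ z.re`. Since that set carries at least half of the circle, it contains almost all of the
closed left half-circle, hence all of it by continuity, in particular the top point `z + r i`,
which lies above `z` in `K`: contradiction. -/

/-- `m` is a median of `u` over the circle `∂B(x,r)` with respect to arclength measure,
parametrized by `θ ↦ x + r e^{iθ}`. -/
def IsCircleMedian (x : ℂ) (r : ℝ) (u : ℂ → ℝ) (m : ℝ) : Prop :=
  volume (Ioc (0:ℝ) (2*π)) / 2 ≤ volume {θ ∈ Ioc (0:ℝ) (2*π) | m ≤ u (circleMap x r θ)} ∧
  volume (Ioc (0:ℝ) (2*π)) / 2 ≤ volume {θ ∈ Ioc (0:ℝ) (2*π) | u (circleMap x r θ) ≤ m}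

/-- `u` has the local median value property on `Ω`. -/
def HasLMVP (Ω : Set ℂ) (u : ℂ → ℝ) : Prop :=
  ∃ R : ℂ → ℝ, ContinuousOn R Ω ∧
    (∀ x ∈ Ω, 0 < R x ∧ R x ≤ Metric.infDist x Ωᶜ) ∧
    (∀ x ∈ Ω, ∀ r : ℝ, 0 < r → r ≤ R x → IsCircleMedian x r u (u x))

lemma volume_Ioc_zero_two_pi_div_two : volume (Ioc (0:ℝ) (2 * π)) / 2 = ENNReal.ofReal π := by
  rw [Real.volume_Ioc, sub_zero, ENNReal.ofReal_mul zero_le_two, ENNReal.ofReal_ofNat,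
    mul_comm, ENNReal.mul_div_cancel_right two_ne_zero ENNReal.ofNat_ne_top]

lemma mem_Icc_of_cos_nonpos {θ : ℝ} (hθ : θ ∈ Ioc 0 (2 * π)) (hcos : cos θ ≤ 0) :
    θ ∈ Icc (π / 2) (3 * π / 2) := by
  obtain ⟨h0, h2π⟩ := hθ
  constructor
  · by_contra! h
    exact hcos.not_gt (cos_pos_of_mem_Ioo ⟨by linarith [pi_pos], h⟩)
  · by_contra! h
    have := cos_pos_of_mem_Ioo (x := θ - 2 * π) ⟨by linarith, by linarith [pi_pos]⟩
    rw [cos_sub_two_pi] at this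
    linarith

lemma Icc_subset_of_isClosed_of_volume_diff_eq_zero {S : Set ℝ} {a b : ℝ} (hab : a < b)
    (hS : IsClosed S) (hnull : volume (Icc a b \ S) = 0) : Icc a b ⊆ S := by
  have hempty : Ioo a b \ S = ∅ :=
    (isOpen_Ioo.sdiff hS).eq_empty_of_measure_zero
      (measure_mono_null (sdiff_subset_sdiff_left Ioo_subset_Icc_self) hnull)
  rw [← closure_Ioo hab.ne]
  exact closure_minimal (sdiff_eq_empty.mp hempty) hS

lemma isCircleMedian_of_forall_eq {x : ℂ} {r : ℝ} {u : ℂ → ℝ} {m : ℝ} (hu : ∀ z, u z = m) :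
    IsCircleMedian x r u m := by
  simp only [IsCircleMedian, hu, le_refl, and_true, ofPred_mem_eq]
  exact ⟨ENNReal.half_le_self, ENNReal.half_le_self⟩

lemma IsCircleMedian.neg {x : ℂ} {r : ℝ} {u : ℂ → ℝ} {m : ℝ} (h : IsCircleMedian x r u m) :
    IsCircleMedian x r (-u) (-m) := by
  simpa only [IsCircleMedian, Pi.neg_apply, neg_le_neg_iff] using h.symm

lemma HasLMVP.neg {Ω : Set ℂ} {u : ℂ → ℝ} (h : HasLMVP Ω u) : HasLMVP Ω (-u) := by
  obtain ⟨R, hRcont, hRpos, hmed⟩ := h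
  exact ⟨R, hRcont, hRpos, fun x hx r hr hrR => (hmed x hx r hr hrR).neg⟩

lemma HasLMVP.exists_radius {Ω : Set ℂ} {u : ℂ → ℝ} (h : HasLMVP Ω u) {x : ℂ} (hx : x ∈ Ω) :
    ∃ r > 0, closedBall x r ⊆ closure Ω ∧ IsCircleMedian x r u (u x) := by
  obtain ⟨R, -, hRpos, hmed⟩ := h
  obtain ⟨hR0, hRdist⟩ := hRpos x hx
  exact ⟨R x, hR0, (closedBall_subset_closedBall hRdist).trans
    (closedBall_infDist_compl_subset_closure hx), hmed x hx _ hR0 le_rfl⟩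

lemma IsCircleMedian.apply_add_mul_I_eq_of_isMax_left {x : ℂ} {r : ℝ} {u : ℂ → ℝ} {M : ℝ}
    (hmed : IsCircleMedian x r u M) (hr : 0 < r)
    (hcont : Continuous fun θ => u (circleMap x r θ)) (hle : ∀ θ, u (circleMap x r θ) ≤ M)
    (hleft : ∀ θ, u (circleMap x r θ) = M → (circleMap x r θ).re ≤ x.re) :
    u (x + r * Complex.I) = M := by
  set S := {θ : ℝ | u (circleMap x r θ) = M}
  have hS : IsClosed S := isClosed_eq hcont continuous_const
  have hsub : {θ ∈ Ioc (0:ℝ) (2 * π) | M ≤ u (circleMap x r θ)} ⊆ Icc (π / 2) (3 * π / 2) ∩ S := by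
    rintro θ ⟨hθ, hMθ⟩
    have heq : u (circleMap x r θ) = M := (hle θ).antisymm hMθ
    have hre := hleft θ heq
    rw [← sub_nonpos, ← Complex.sub_re, circleMap_sub_center, circleMap_zero_re] at hre
    exact ⟨mem_Icc_of_cos_nonpos hθ (nonpos_of_mul_nonpos_right hre hr), heq⟩
  have hπ : ENNReal.ofReal π ≤ volume (Icc (π / 2) (3 * π / 2) ∩ S) := by
    rw [← volume_Ioc_zero_two_pi_div_two]
    exact hmed.1.trans (measure_mono hsub)
  have hnull : volume (Icc (π / 2) (3 * π / 2) \ S) = 0 := by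
    rw [← sdiff_self_inter, measure_sdiff inter_subset_left
      (isClosed_Icc.inter hS).measurableSet.nullMeasurableSet
      ((measure_mono inter_subset_left).trans_lt measure_Icc_lt_top).ne,
      Real.volume_Icc, show 3 * π / 2 - π / 2 = π by ring]
    exact tsub_eq_zero_of_le hπ
  have htop : π / 2 ∈ S :=
    Icc_subset_of_isClosed_of_volume_diff_eq_zero (by linarith [pi_pos]) hS hnull
      ⟨le_rfl, by linarith [pi_pos]⟩
  rwa [← circleMap_pi_div_two]

lemma IsCompact.exists_lex_max {K : Set ℂ} (hK : IsCompact K) (hne : K.Nonempty) :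
    ∃ z ∈ K, (∀ w ∈ K, w.re ≤ z.re) ∧ ∀ w ∈ K, w.re = z.re → w.im ≤ z.im := by
  obtain ⟨x, hxK, hxmax⟩ := hK.exists_isMaxOn hne Complex.continuous_re.continuousOn
  have hL : IsCompact (K ∩ {w | w.re = x.re}) :=
    hK.inter_right (isClosed_eq Complex.continuous_re continuous_const)
  obtain ⟨z, ⟨hzK, hzre⟩, hzmax⟩ :=
    hL.exists_isMaxOn ⟨x, hxK, rfl⟩ Complex.continuous_im.continuousOn
  exact ⟨z, hzK, fun w hw => hzre ▸ hxmax hw, fun w hw hwre => hzmax ⟨hw, hwre.trans hzre⟩⟩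

theorem HasLMVP.le_of_forall_frontier_le {Ω : Set ℂ} {u : ℂ → ℝ} (h : HasLMVP Ω u)
    (hΩ : IsOpen Ω) (hb : Bornology.IsBounded Ω) (hu : ContinuousOn u (closure Ω)) {c : ℝ}
    (hc : ∀ x ∈ frontier Ω, u x ≤ c) {x : ℂ} (hx : x ∈ Ω) : u x ≤ c := by
  obtain ⟨x₀, hx₀, hmax⟩ :=
    hb.isCompact_closure.exists_isMaxOn ⟨x, subset_closure hx⟩ hu
  refine (hmax (subset_closure hx)).trans (not_lt.mp fun hcM => ?_)
  set M := u x₀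
  set K := closure Ω ∩ u ⁻¹' {M}
  have hKΩ : K ⊆ Ω := fun z ⟨hzcl, hzM⟩ => by
    by_contra hzΩ
    have := hc z ⟨hzcl, by rwa [hΩ.interior_eq]⟩
    rw [show u z = M from hzM] at this
    exact this.not_gt hcM
  have hK : IsCompact K := hb.isCompact_closure.of_isClosed_subset
    (hu.preimage_isClosed_of_isClosed isClosed_closure isClosed_singleton) inter_subset_left
  obtain ⟨z, hzK, hzre, hzim⟩ := hK.exists_lex_max ⟨x₀, hx₀, rfl⟩
  obtain ⟨r, hr, hball, hmed⟩ := h.exists_radius (hKΩ hzK)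
  have hcirc : ∀ θ, circleMap z r θ ∈ closure Ω := fun θ =>
    hball (circleMap_mem_closedBall z hr.le θ)
  have htop : u (z + r * Complex.I) = M :=
    (hzK.2 ▸ hmed).apply_add_mul_I_eq_of_isMax_left hr
      (hu.comp_continuous (continuous_circleMap z r) hcirc) (fun θ => hmax (hcirc θ))
      fun θ hθ => hzre _ ⟨hcirc θ, hθ⟩
  have him := hzim _ ⟨circleMap_pi_div_two z r ▸ hcirc (π / 2), htop⟩ (by simp)
  simp only [Complex.add_im, Complex.mul_I_im, Complex.ofReal_re] at him
  linarith

theorem constant_gmvp_and_converse_general (Ω : Set ℂ) (hΩ : IsOpen Ω)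
    (hb : Bornology.IsBounded Ω)
    (u : ℂ → ℝ) (hu : ContinuousOn u (closure Ω)) (hlmvp : HasLMVP Ω u)
    (hbc : ∃ c : ℝ, ∀ x ∈ frontier Ω, u x = c) :
    (∀ (c : ℝ) (w : ℂ → ℝ), (∀ z : ℂ, w z = c) →
      ∀ x ∈ Ω, ∀ r > (0:ℝ), closedBall x r ⊆ Ω → IsCircleMedian x r w (w x)) ∧
    (∃ c : ℝ, ∀ x ∈ Ω, u x = c) := by
  refine ⟨fun c w hw x _ r _ _ => isCircleMedian_of_forall_eq fun z => (hw z).trans (hw x).symm,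
    ?_⟩
  obtain ⟨c, hc⟩ := hbc
  refine ⟨c, fun x hx => le_antisymm ?_ ?_⟩
  · exact hlmvp.le_of_forall_frontier_le hΩ hb hu (fun y hy => (hc y hy).le) hx
  · exact neg_le_neg_iff.mp <| hlmvp.neg.le_of_forall_frontier_le hΩ hb hu.neg
      (fun y hy => neg_le_neg (hc y hy).ge) hx

theorem constant_gmvp_and_converse (Ω : Set ℂ) (hΩ : IsOpen Ω)
    (hb : Bornology.IsBounded Ω) (hconn : IsConnected Ω)
    (u : ℂ → ℝ) (hu : ContinuousOn u (closure Ω)) (hlmvp : HasLMVP Ω u)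
    (hbc : ∃ c : ℝ, ∀ x ∈ frontier Ω, u x = c) :
    (∀ (c : ℝ) (w : ℂ → ℝ), (∀ z : ℂ, w z = c) →
      ∀ x ∈ Ω, ∀ r > (0:ℝ), closedBall x r ⊆ Ω → IsCircleMedian x r w (w x)) ∧
    (∃ c : ℝ, ∀ x ∈ Ω, u x = c) :=
  constant_gmvp_and_converse_general Ω hΩ hb u hu hlmvp hbc
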